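/- arXiv:0908.0320 — 5 statements merged into one kernel-verified Lean document; each statement's English description precedes it below -/
import Mathlib

section
/- If the Rankine–Hugoniot conditions f(s_R,c_R) − f(s_L,c_L) = σ(s_R − s_L) and c_R f(s_R,c_R) − c_L f(s_L,c_L) = σ(s_R c_R + a(c_R) − s_L c_L − a(c_L)) hold with c_L ≠ c_R, then σ = f(s_L,c_L)/(s_L + ā_L(c_R)) = f(s_R,c_R)/(s_R + ā_L(c_R)), where ā_L(c) = (a(c) − a(c_L))/(c − c_L) for c ≠ c_L. -/
section RankineHugoniot

variable {K : Type*} [Field K] {fL fR sL sR cL cR aL aR σ : K}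

-- `(second condition) - cR * (first condition)` eliminates `fR`.
theorem left_flux_eq_speed_mul (hc : cL ≠ cR) (hRH1 : fR - fL = σ * (sR - sL))
    (hRH2 : cR * fR - cL * fL = σ * (sR * cR + aR - sL * cL - aL)) :
    fL = σ * (sL + (aR - aL) / (cR - cL)) := by
  have hd : cR - cL ≠ 0 := sub_ne_zero.mpr hc.symm
  field_simp
  linear_combination hRH2 - cR * hRH1

-- `(second condition) - cL * (first condition)` eliminates `fL`.
theorem right_flux_eq_speed_mul (hc : cL ≠ cR) (hRH1 : fR - fL = σ * (sR - sL))
    (hRH2 : cR * fR - cL * fL = σ * (sR * cR + aR - sL * cL - aL)) :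
    fR = σ * (sR + (aR - aL) / (cR - cL)) := by
  have hd : cR - cL ≠ 0 := sub_ne_zero.mpr hc.symm
  field_simp
  linear_combination hRH2 - cL * hRH1

end RankineHugoniot

/-- Rankine–Hugoniot conditions with `c_L ≠ c_R` force the shock speed
`σ = f(s_L,c_L)/(s_L + ā_L(c_R)) = f(s_R,c_R)/(s_R + ā_L(c_R))`. -/
theorem rankine_hugoniot_speed
    (f : ℝ → ℝ → ℝ) (a : ℝ → ℝ) (sL sR cL cR σ : ℝ)
    (hc : cL ≠ cR)
    (hL : sL + (a cR - a cL) / (cR - cL) ≠ 0)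
    (hR : sR + (a cR - a cL) / (cR - cL) ≠ 0)
    (hRH1 : f sR cR - f sL cL = σ * (sR - sL))
    (hRH2 : cR * f sR cR - cL * f sL cL
        = σ * (sR * cR + a cR - sL * cL - a cL)) :
    σ = f sL cL / (sL + (a cR - a cL) / (cR - cL)) ∧
    σ = f sR cR / (sR + (a cR - a cL) / (cR - cL)) :=
  ⟨(eq_div_iff hL).2 (left_flux_eq_speed_mul hc hRH1 hRH2).symm,
    (eq_div_iff hR).2 (right_flux_eq_speed_mul hc hRH1 hRH2).symm⟩
end

section
/- If f_L ≡ f_R = g (i.e., the flux is continuous in space), then the DFLU flux F(u_L,u_R) = min{ g(min{u_L,θ}), g(max{u_R,θ}) } equals the Godunov flux: F(u_L,u_R) = min over [u_L,u_R] of g if u_L ≤ u_R, and max over [u_R,u_L] of g if u_L > u_R. -/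
/-!
If `g` increases up to `θ` and decreases after it, then on any interval `g` attains its minimum
at an endpoint and its maximum at the point of the interval closest to `θ`. Replacing `u_L` by
`min u_L θ` and `u_R` by `max u_R θ` moves each argument towards `θ`, which can only raise the
value of `g`; comparing the cases `θ ≤ u_R`, `u_L ≤ θ` and `u_R < θ < u_L` with these extrema
gives the Godunov flux.
-/

open Set

def dfluFlux {α β : Type*} [LinearOrder α] [LinearOrder β] (g : α → β) (θ uL uR : α) : β :=
  min (g (min uL θ)) (g (max uR θ))

namespace Unimodal

variable {α β : Type*} [LinearOrder α] [LinearOrder β] {g : α → β} {a b θ u v x : α}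

theorem apply_le_apply_peak (hinc : MonotoneOn g (Icc a θ)) (hdec : AntitoneOn g (Icc θ b))
    (hx : x ∈ Icc a b) : g x ≤ g θ := by
  rcases le_total x θ with hxθ | hθx
  · exact hinc ⟨hx.1, hxθ⟩ ⟨hx.1.trans hxθ, le_rfl⟩ hxθ
  · exact hdec ⟨le_rfl, hθx.trans hx.2⟩ ⟨hθx, hx.2⟩ hθx

theorem isLeast_image_Icc (hinc : MonotoneOn g (Icc a θ)) (hdec : AntitoneOn g (Icc θ b))
    (hau : a ≤ u) (huv : u ≤ v) (hvb : v ≤ b) :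
    IsLeast (g '' Icc u v) (min (g u) (g v)) := by
  refine ⟨?_, ?_⟩
  · rcases min_choice (g u) (g v) with h | h <;> rw [h]
    exacts [mem_image_of_mem g (left_mem_Icc.2 huv), mem_image_of_mem g (right_mem_Icc.2 huv)]
  · rintro _ ⟨x, hx, rfl⟩
    rcases le_total x θ with hxθ | hθx
    · exact (min_le_left _ _).trans (hinc ⟨hau, hx.1.trans hxθ⟩ ⟨hau.trans hx.1, hxθ⟩ hx.1)
    · exact (min_le_right _ _).trans (hdec ⟨hθx, hx.2.trans hvb⟩ ⟨hθx.trans hx.2, hvb⟩ hx.2)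

theorem dfluFlux_eq_min (hinc : MonotoneOn g (Icc a θ)) (hdec : AntitoneOn g (Icc θ b))
    (hu : u ∈ Icc a b) (hv : v ∈ Icc a b) (huv : u ≤ v) :
    dfluFlux g θ u v = min (g u) (g v) := by
  unfold dfluFlux
  rcases le_total u θ with huθ | hθu
  · rw [min_eq_left huθ]
    rcases le_total v θ with hvθ | hθv
    · have hv_le : g v ≤ g θ := apply_le_apply_peak hinc hdec hv
      have hu_le : g u ≤ g v := hinc ⟨hu.1, huθ⟩ ⟨hu.1.trans huv, hvθ⟩ huv
      rw [max_eq_right hvθ, min_eq_left (hu_le.trans hv_le), min_eq_left hu_le]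
    · rw [max_eq_left hθv]
  · have hu_le : g u ≤ g θ := apply_le_apply_peak hinc hdec hu
    have hv_le : g v ≤ g u := hdec ⟨hθu, hu.2⟩ ⟨hθu.trans huv, hv.2⟩ huv
    rw [min_eq_right hθu, max_eq_left (hθu.trans huv), min_eq_right (hv_le.trans hu_le),
      min_eq_right hv_le]

theorem isLeast_dfluFlux (hinc : MonotoneOn g (Icc a θ)) (hdec : AntitoneOn g (Icc θ b))
    (hu : u ∈ Icc a b) (hv : v ∈ Icc a b) (huv : u ≤ v) :
    IsLeast (g '' Icc u v) (dfluFlux g θ u v) := by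
  rw [dfluFlux_eq_min hinc hdec hu hv huv]
  exact isLeast_image_Icc hinc hdec hu.1 huv hv.2

theorem isGreatest_dfluFlux (hinc : MonotoneOn g (Icc a θ)) (hdec : AntitoneOn g (Icc θ b))
    (hv : v ∈ Icc a b) (hu : u ∈ Icc a b) (hvu : v ≤ u) :
    IsGreatest (g '' Icc v u) (dfluFlux g θ u v) := by
  unfold dfluFlux
  rcases le_total u θ with huθ | hθu
  · rw [min_eq_left huθ, max_eq_right (hvu.trans huθ),
      min_eq_left (apply_le_apply_peak hinc hdec hu)]
    exact (hinc.mono (Icc_subset_Icc hv.1 huθ)).map_isGreatest (isGreatest_Icc hvu)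
  rcases le_total θ v with hθv | hvθ
  · rw [min_eq_right hθu, max_eq_left hθv, min_eq_right (apply_le_apply_peak hinc hdec hv)]
    exact (hdec.mono (Icc_subset_Icc hθv hu.2)).map_isLeast (isLeast_Icc hvu)
  · have hθ : θ ∈ Icc v u := ⟨hvθ, hθu⟩
    rw [min_eq_right hθu, max_eq_right hvθ, min_self]
    refine ⟨mem_image_of_mem g hθ, ?_⟩
    rintro _ ⟨x, hx, rfl⟩
    exact apply_le_apply_peak hinc hdec ⟨hv.1.trans hx.1, hx.2.trans hu.2⟩

end Unimodal

theorem dflu_eq_godunov_general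
    (g : ℝ → ℝ) (θ : ℝ)
    (hinc : StrictMonoOn g (Set.Icc 0 θ))
    (hdec : StrictAntiOn g (Set.Icc θ 1))
    (uL uR : ℝ) (hL : uL ∈ Set.Icc (0:ℝ) 1) (hR : uR ∈ Set.Icc (0:ℝ) 1) :
    (uL ≤ uR →
      min (g (min uL θ)) (g (max uR θ)) = sInf (g '' Set.Icc uL uR)) ∧
    (uR < uL →
      min (g (min uL θ)) (g (max uR θ)) = sSup (g '' Set.Icc uR uL)) :=
  ⟨fun h => (Unimodal.isLeast_dfluFlux hinc.monotoneOn hdec.antitoneOn hL hR h).csInf_eq.symm,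
    fun h =>
      (Unimodal.isGreatest_dfluFlux hinc.monotoneOn hdec.antitoneOn hR hL h.le).csSup_eq.symm⟩

/-- When the left and right fluxes coincide, the DFLU flux equals the
Godunov flux. -/
theorem dflu_eq_godunov
    (g : ℝ → ℝ) (θ : ℝ) (hθ : θ ∈ Set.Icc (0:ℝ) 1)
    (hcont : ContinuousOn g (Set.Icc 0 1))
    (hinc : StrictMonoOn g (Set.Icc 0 θ))
    (hdec : StrictAntiOn g (Set.Icc θ 1))
    (uL uR : ℝ) (hL : uL ∈ Set.Icc (0:ℝ) 1) (hR : uR ∈ Set.Icc (0:ℝ) 1) :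
    (uL ≤ uR →
      min (g (min uL θ)) (g (max uR θ)) = sInf (g '' Set.Icc uL uR)) ∧
    (uR < uL →
      min (g (min uL θ)) (g (max uR θ)) = sSup (g '' Set.Icc uR uL)) :=
  dflu_eq_godunov_general g θ hinc hdec uL uR hL hR
end

section
/- Under the CFL condition λM ≤ 1, where M is a bound on the Lipschitz constants of f in s, the update function H(s₁,s₂,s₃,c₁,c₂,c₃) = s₂ − λ(F^{DFLU}(s₂,c₂,s₃,c₃) − F^{DFLU}(s₁,c₁,s₂,c₂)) is nondecreasing in each of s₁, s₂, s₃. -/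
/-- If `a ≤ b`, then `min b c - min a c ≤ b - a`. -/
lemma min_sub_min_le_aux {a b c : ℝ} (h : a ≤ b) : min b c - min a c ≤ b - a := by
  rcases le_total a c with h' | h'
  · rw [min_eq_left h']; linarith [min_le_left b c]
  · rw [min_eq_right h']; linarith [min_le_right b c]

/-- Under the CFL condition `λM ≤ 1`, the DFLU update function
`H(s₁,s₂,s₃,c₁,c₂,c₃) = s₂ − λ(F(s₂,c₂,s₃,c₃) − F(s₁,c₁,s₂,c₂))`
is nondecreasing in each of `s₁, s₂, s₃`. -/
theorem dflu_update_monotone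
    (f : ℝ → ℝ → ℝ) (θ : ℝ → ℝ) (lam M : ℝ)
    (hθ : ∀ c ∈ Set.Icc (0:ℝ) 1, θ c ∈ Set.Icc (0:ℝ) 1)
    (hdiff : ∀ c ∈ Set.Icc (0:ℝ) 1, ∀ s ∈ Set.Icc (0:ℝ) 1,
      DifferentiableAt ℝ (fun t => f t c) s)
    (hM : ∀ c ∈ Set.Icc (0:ℝ) 1, ∀ s ∈ Set.Icc (0:ℝ) 1,
      |deriv (fun t => f t c) s| ≤ M)
    (hinc : ∀ c ∈ Set.Icc (0:ℝ) 1, MonotoneOn (fun t => f t c) (Set.Icc 0 (θ c)))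
    (hdec : ∀ c ∈ Set.Icc (0:ℝ) 1, AntitoneOn (fun t => f t c) (Set.Icc (θ c) 1))
    (hlam : 0 < lam) (hcfl : lam * M ≤ 1)
    (F : ℝ → ℝ → ℝ → ℝ → ℝ)
    (hF : ∀ s₁ c₁ s₂ c₂, F s₁ c₁ s₂ c₂
      = min (f (min s₁ (θ c₁)) c₁) (f (max s₂ (θ c₂)) c₂))
    (H : ℝ → ℝ → ℝ → ℝ → ℝ → ℝ → ℝ)
    (hH : ∀ s₁ s₂ s₃ c₁ c₂ c₃, H s₁ s₂ s₃ c₁ c₂ c₃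
      = s₂ - lam * (F s₂ c₂ s₃ c₃ - F s₁ c₁ s₂ c₂)) :
    ∀ c₁ ∈ Set.Icc (0:ℝ) 1, ∀ c₂ ∈ Set.Icc (0:ℝ) 1, ∀ c₃ ∈ Set.Icc (0:ℝ) 1,
    (∀ s₂ ∈ Set.Icc (0:ℝ) 1, ∀ s₃ ∈ Set.Icc (0:ℝ) 1,
      ∀ x ∈ Set.Icc (0:ℝ) 1, ∀ y ∈ Set.Icc (0:ℝ) 1, x ≤ y →
        H x s₂ s₃ c₁ c₂ c₃ ≤ H y s₂ s₃ c₁ c₂ c₃) ∧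
    (∀ s₁ ∈ Set.Icc (0:ℝ) 1, ∀ s₃ ∈ Set.Icc (0:ℝ) 1,
      ∀ x ∈ Set.Icc (0:ℝ) 1, ∀ y ∈ Set.Icc (0:ℝ) 1, x ≤ y →
        H s₁ x s₃ c₁ c₂ c₃ ≤ H s₁ y s₃ c₁ c₂ c₃) ∧
    (∀ s₁ ∈ Set.Icc (0:ℝ) 1, ∀ s₂ ∈ Set.Icc (0:ℝ) 1,
      ∀ x ∈ Set.Icc (0:ℝ) 1, ∀ y ∈ Set.Icc (0:ℝ) 1, x ≤ y →
        H s₁ s₂ x c₁ c₂ c₃ ≤ H s₁ s₂ y c₁ c₂ c₃) := by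
  intro c₁ hc₁ c₂ hc₂ c₃ hc₃
  -- membership of truncated points
  have memmin : ∀ c ∈ Set.Icc (0:ℝ) 1, ∀ x ∈ Set.Icc (0:ℝ) 1,
      min x (θ c) ∈ Set.Icc (0:ℝ) (θ c) := by
    intro c hc x hx
    exact ⟨le_min hx.1 (hθ c hc).1, min_le_right _ _⟩
  have memmax : ∀ c ∈ Set.Icc (0:ℝ) 1, ∀ x ∈ Set.Icc (0:ℝ) 1,
      max x (θ c) ∈ Set.Icc (θ c) 1 := by
    intro c hc x hx
    exact ⟨le_max_right _ _, max_le hx.2 (hθ c hc).2⟩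
  -- the first slot of F is monotone, the second antitone (on [0,1])
  have Fmono1 : ∀ a b u cu, a ∈ Set.Icc (0:ℝ) 1 → b ∈ Set.Icc (0:ℝ) 1 → a ≤ b →
      ∀ c ∈ Set.Icc (0:ℝ) 1, F a c u cu ≤ F b c u cu := by
    intro a b u cu ha hb hab c hc
    rw [hF, hF]
    refine min_le_min ?_ le_rfl
    exact hinc c hc (memmin c hc a ha) (memmin c hc b hb) (min_le_min hab le_rfl)
  have Fanti2 : ∀ a b u cu, a ∈ Set.Icc (0:ℝ) 1 → b ∈ Set.Icc (0:ℝ) 1 → a ≤ b →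
      ∀ c ∈ Set.Icc (0:ℝ) 1, F u cu b c ≤ F u cu a c := by
    intro a b u cu ha hb hab c hc
    rw [hF, hF]
    refine min_le_min le_rfl ?_
    exact hdec c hc (memmax c hc a ha) (memmax c hc b hb) (max_le_max hab le_rfl)
  refine ⟨?_, ?_, ?_⟩
  · -- monotone in s₁
    intro s₂ hs₂ s₃ hs₃ x hx y hy hxy
    rw [hH, hH]
    have := Fmono1 x y s₂ c₂ hx hy hxy c₁ hc₁
    nlinarith
  · -- monotone in s₂: the hard case
    intro s₁ hs₁ s₃ hs₃ x hx y hy hxy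
    rw [hH, hH, hF, hF, hF, hF]
    set t := θ c₂ with ht
    have htm : t ∈ Set.Icc (0:ℝ) 1 := hθ c₂ hc₂
    -- Lipschitz bound for f(·,c₂)
    have hlip : ∀ a ∈ Set.Icc (0:ℝ) 1, ∀ b ∈ Set.Icc (0:ℝ) 1,
        |f b c₂ - f a c₂| ≤ M * |b - a| := by
      intro a ha b hb
      have := (convex_Icc (0:ℝ) 1).norm_image_sub_le_of_norm_deriv_le
        (hdiff c₂ hc₂) (by simpa [Real.norm_eq_abs] using hM c₂ hc₂) ha hb
      simpa [Real.norm_eq_abs] using this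
    have hmem1 : min x t ∈ Set.Icc (0:ℝ) 1 :=
      ⟨le_min hx.1 htm.1, le_trans (min_le_left _ _) hx.2⟩
    have hmem2 : min y t ∈ Set.Icc (0:ℝ) 1 :=
      ⟨le_min hy.1 htm.1, le_trans (min_le_left _ _) hy.2⟩
    have hmem3 : max x t ∈ Set.Icc (0:ℝ) 1 :=
      ⟨le_trans htm.1 (le_max_right _ _), max_le hx.2 htm.2⟩
    have hmem4 : max y t ∈ Set.Icc (0:ℝ) 1 :=
      ⟨le_trans htm.1 (le_max_right _ _), max_le hy.2 htm.2⟩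
    set mA := f (min x t) c₂ with hmA
    set mB := f (min y t) c₂ with hmB
    set MA := f (max x t) c₂ with hMA
    set MB := f (max y t) c₂ with hMB
    set A := f (max s₃ (θ c₃)) c₃ with hA
    set B := f (min s₁ (θ c₁)) c₁ with hB
    -- Lipschitz bounds
    have hminle : min x t ≤ min y t := min_le_min hxy le_rfl
    have hmaxle : max x t ≤ max y t := max_le_max hxy le_rfl
    have l1 : mB - mA ≤ M * (min y t - min x t) := by
      have h := hlip (min x t) hmem1 (min y t) hmem2
      rw [abs_of_nonneg (sub_nonneg.mpr hminle)] at h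
      exact le_trans (le_abs_self _) h
    have l2 : MA - MB ≤ M * (max y t - max x t) := by
      have h := hlip (max x t) hmem3 (max y t) hmem4
      rw [abs_of_nonneg (sub_nonneg.mpr hmaxle)] at h
      rw [abs_sub_comm] at h
      exact le_trans (le_abs_self _) h
    -- monotonicity of the truncated values
    have hmAB : mA ≤ mB :=
      hinc c₂ hc₂ (memmin c₂ hc₂ x hx) (memmin c₂ hc₂ y hy) hminle
    have hMBA : MB ≤ MA :=
      hdec c₂ hc₂ (memmax c₂ hc₂ x hx) (memmax c₂ hc₂ y hy) hmaxle
    -- min–min differences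
    have d1 : min mB A - min mA A ≤ mB - mA := min_sub_min_le_aux hmAB
    have d1' : 0 ≤ min mB A - min mA A := by
      have := min_le_min hmAB (le_refl A); linarith
    have d2 : min B MA - min B MB ≤ MA - MB := by
      have := min_sub_min_le_aux (c := B) hMBA
      rw [min_comm MA B, min_comm MB B] at this; linarith
    have d2' : 0 ≤ min B MA - min B MB := by
      have := min_le_min (le_refl B) hMBA; linarith
    -- key identity: min + max = x + y shifted
    have key : (min y t - min x t) + (max y t - max x t) = y - x := by
      have k1 : min x t + max x t = x + t := min_add_max x t
      have k2 : min y t + max y t = y + t := min_add_max y t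
      linarith
    have hMnn : 0 ≤ M := le_trans (abs_nonneg _) (hM c₂ hc₂ 0 ⟨le_refl _, zero_le_one⟩)
    have sum : (min mB A - min mA A) + (min B MA - min B MB) ≤ M * (y - x) := by
      nlinarith
    have final : lam * ((min mB A - min mA A) + (min B MA - min B MB)) ≤ y - x := by
      have h1 : lam * ((min mB A - min mA A) + (min B MA - min B MB)) ≤ lam * (M * (y - x)) :=
        mul_le_mul_of_nonneg_left sum hlam.le
      have h2 : lam * (M * (y - x)) ≤ 1 * (y - x) := by
        rw [← mul_assoc]
        exact mul_le_mul_of_nonneg_right hcfl (by linarith)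
      linarith
    linarith
  · -- monotone in s₃
    intro s₁ hs₁ s₂ hs₂ x hx y hy hxy
    rw [hH, hH]
    have := Fanti2 x y s₂ c₂ hx hy hxy c₃ hc₃
    nlinarith
end

section
/- (TVD property for concentration) If c_i^{n+1} = (1 − b_i^n) c_i^n + b_i^n c_{i−1}^n with 0 ≤ b_i^n ≤ 1 for all i ∈ ℤ, and (c_i^n) has bounded total variation, then Σ_i |c_i^{n+1} − c_{i−1}^{n+1}| ≤ Σ_i |c_i^n − c_{i−1}^n|. -/
/-!
Writing `d i = c i - c (i - 1)`, the update gives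
`c' i - c' (i - 1) = (1 - b i) * d i + b (i - 1) * d (i - 1)`, a combination with nonnegative
weights. By the triangle inequality each `|d i|` is then counted with total weight at most
`(1 - b i) + b i = 1` in the variation of `c'`, the weight `b i` being shifted to index `i + 1`.
-/

open Set

def upwindStep (b c : ℤ → ℝ) (i : ℤ) : ℝ :=
  (1 - b i) * c i + b i * c (i - 1)

lemma upwindStep_sub_upwindStep (b c : ℤ → ℝ) (i : ℤ) :
    upwindStep b c i - upwindStep b c (i - 1) =
      (1 - b i) * (c i - c (i - 1)) + b (i - 1) * (c (i - 1) - c (i - 1 - 1)) := by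
  unfold upwindStep
  ring

lemma abs_upwindStep_sub_le {b : ℤ → ℝ} (hb : ∀ i, b i ∈ Icc (0 : ℝ) 1) (c : ℤ → ℝ) (i : ℤ) :
    |upwindStep b c i - upwindStep b c (i - 1)| ≤
      (1 - b i) * |c i - c (i - 1)| + b (i - 1) * |c (i - 1) - c (i - 1 - 1)| := by
  rw [upwindStep_sub_upwindStep]
  calc _ ≤ |(1 - b i) * (c i - c (i - 1))| + |b (i - 1) * (c (i - 1) - c (i - 1 - 1))| :=
        abs_add_le _ _
    _ = _ := by
        rw [abs_mul, abs_mul, abs_of_nonneg (sub_nonneg.2 (hb i).2), abs_of_nonneg (hb (i - 1)).1]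

lemma Summable.mul_left_of_mem_Icc {ι : Type*} {f w : ι → ℝ} (hf : Summable f)
    (hf0 : ∀ i, 0 ≤ f i) (hw : ∀ i, w i ∈ Icc (0 : ℝ) 1) : Summable fun i => w i * f i :=
  hf.of_nonneg_of_le (fun i => mul_nonneg (hw i).1 (hf0 i))
    (fun i => mul_le_of_le_one_left (hf0 i) (hw i).2)

lemma HasSum.one_sub_mul_add_mul_sub_one {f w : ℤ → ℝ} {a s : ℝ} (hf : HasSum f a)
    (hwf : HasSum (fun i => w i * f i) s) :
    HasSum (fun i => (1 - w i) * f i + w (i - 1) * f (i - 1)) a := by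
  have hshift : HasSum (fun i => w (i - 1) * f (i - 1)) s :=
    (Equiv.subRight (1 : ℤ)).hasSum_iff.2 hwf
  simpa only [sub_mul, one_mul, sub_add_cancel] using (hf.sub hwf).add hshift

/-- TVD property of the convex-combination concentration update. -/
theorem concentration_tvd
    (c c' : ℤ → ℝ) (b : ℤ → ℝ)
    (hb : ∀ i, b i ∈ Set.Icc (0:ℝ) 1)
    (hsum : Summable (fun i => |c i - c (i - 1)|))
    (hupd : ∀ i, c' i = (1 - b i) * c i + b i * c (i - 1)) :
    ∑' i : ℤ, |c' i - c' (i - 1)| ≤ ∑' i : ℤ, |c i - c (i - 1)| := by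
  obtain rfl : c' = upwindStep b c := funext hupd
  have hbound := hsum.hasSum.one_sub_mul_add_mul_sub_one
    (hsum.mul_left_of_mem_Icc (fun i => abs_nonneg _) hb).hasSum
  have hsum' : Summable fun i => |upwindStep b c i - upwindStep b c (i - 1)| :=
    hbound.summable.of_nonneg_of_le (fun i => abs_nonneg _) (abs_upwindStep_sub_le hb c)
  exact hasSum_le (abs_upwindStep_sub_le hb c) hsum'.hasSum hbound
end

section
/- For the flux f(s,c) = s(4−s)/(1+c), a(c) = c, and Riemann data (s_L,c_L) = (2.5, 0.5), (s_R,c_R) = (1, 0) (Case 2a), the piecewise function s(x,t) consisting of the rarefaction fan s = (4 − 1.5·(x−0.5)/t)/2 between speeds σ₁ = f_s(s_L,c_L) = −2/3 and σ_c, the constant state s̄ between σ_c and σ₂, and the outer constant states, together with c jumping from 0.5 to 0 at speed σ_c, satisfies the Rankine–Hugoniot conditions at each discontinuity, where σ_c = f(s*,c_L)/(s* + ā_L(c_R)) = f(s̄,c_R)/(s̄ + ā_L(c_R)) with f_s(s*,c_L) = σ_c, and σ₂ = (f(s̄,c_R) − f(s_R,c_R))/(s̄ − s_R). -/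
/-!
The point `s* = √5 − 1` is where the chord from `(−1, 0)` touches the graph of `f(·, c)`:
`f(s, c)/(s + 1) = f_s(s, c)` reduces to `(s + 1)² = 5`, for every `c`. Both sides of the
`c`-discontinuity lie on the line through `(−1, 0)` of slope `σ_c`, so the two jump conditions
are linear identities in `σ_c`, and the `s`-shock speed is a secant slope of `f(·, c_R)`.
-/

namespace Case2a

noncomputable def flux (s c : ℝ) : ℝ := s * (4 - s) / (1 + c)

theorem hasDerivAt_flux (s c : ℝ) :
    HasDerivAt (flux · c) ((4 - 2 * s) / (1 + c)) s :=
  (((hasDerivAt_id' s).mul ((hasDerivAt_id' s).const_sub 4)).div_const (1 + c)).congr_deriv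
    (by ring)

theorem flux_div_add_one_of_sq_eq_five {s : ℝ} (c : ℝ) (hs : (s + 1) ^ 2 = 5) :
    flux s c / (s + 1) = (4 - 2 * s) / (1 + c) := by
  have hne : s + 1 ≠ 0 := by
    rintro h
    norm_num [h] at hs
  rw [flux, div_right_comm]
  congr 1
  rw [div_eq_iff hne]
  linear_combination hs

theorem hasDerivAt_flux_of_sq_eq_five {s : ℝ} (c : ℝ) (hs : (s + 1) ^ 2 = 5) :
    HasDerivAt (flux · c) (flux s c / (s + 1)) s := by
  rw [flux_div_add_one_of_sq_eq_five c hs]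
  exact hasDerivAt_flux s c

variable {σ sL sR FL FR : ℝ}

theorem rankineHugoniot_saturation (hL : FL = σ * (sL + 1)) (hR : FR = σ * (sR + 1)) :
    FR - FL = σ * (sR - sL) := by
  rw [hL, hR]
  ring

theorem rankineHugoniot_concentration {a : ℝ → ℝ} (ha : ∀ c, a c = c) (cL cR : ℝ)
    (hL : FL = σ * (sL + 1)) (hR : FR = σ * (sR + 1)) :
    cR * FR - cL * FL = σ * (sR * cR + a cR - sL * cL - a cL) := by
  rw [hL, hR, ha, ha]
  ring

end Case2a

theorem riemann_case2a_rankine_hugoniot_general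
    (f : ℝ → ℝ → ℝ) (hf : ∀ s c, f s c = s * (4 - s) / (1 + c))
    (a : ℝ → ℝ) (ha : ∀ c, a c = c)
    (cL sR cR sStar sbar σc σ₂ : ℝ)
    (hsStar : sStar = Real.sqrt 5 - 1)
    (hσc : σc = f sStar cL / (sStar + 1))
    (hsbar : f sbar cR = σc * (sbar + 1))
    (hσ₂ : σ₂ = (f sbar cR - f sR cR) / (sbar - sR)) :
    -- Rankine–Hugoniot at the c-discontinuity between (s*,c_L) and (s̄,c_R):
    (f sbar cR - f sStar cL = σc * (sbar - sStar) ∧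
     cR * f sbar cR - cL * f sStar cL
       = σc * (sbar * cR + a cR - sStar * cL - a cL)) ∧
    -- Rankine–Hugoniot at the s-discontinuity between (s̄,c_R) and (s_R,c_R):
    (f sR cR - f sbar cR = σ₂ * (sR - sbar)) ∧
    -- the characteristic speed at s* matches σ_c:
    HasDerivAt (fun s => f s cL) σc sStar := by
  obtain rfl : f = Case2a.flux := funext₂ hf
  have hstar : (sStar + 1) ^ 2 = 5 := by
    rw [hsStar, sub_add_cancel, Real.sq_sqrt (by norm_num)]
  have hstar_ne : sStar + 1 ≠ 0 := by
    rw [hsStar, sub_add_cancel]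
    positivity
  have hfstar : Case2a.flux sStar cL = σc * (sStar + 1) := by
    rw [hσc, div_mul_cancel₀ _ hstar_ne]
  refine ⟨⟨Case2a.rankineHugoniot_saturation hfstar hsbar,
    Case2a.rankineHugoniot_concentration ha cL cR hfstar hsbar⟩, ?_, ?_⟩
  · have h := sub_smul_slope (Case2a.flux · cR) sbar sR
    rw [slope_comm, slope_def_field, smul_eq_mul] at h
    rw [hσ₂, mul_comm]
    exact h.symm
  · rw [hσc]
    exact Case2a.hasDerivAt_flux_of_sq_eq_five cL hstar

/-- For `f(s,c) = s(4−s)/(1+c)`, `a(c) = c` and Riemann data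
`(s_L,c_L) = (2.5, 0.5)`, `(s_R,c_R) = (1,0)` (Case 2a), with
`s* = √5 − 1`, `σ_c = f(s*,c_L)/(s*+1)` and `s̄` the intersection state,
the Rankine–Hugoniot conditions hold at the `c`-discontinuity and at the
`s`-discontinuity, and `f_s(s*,c_L) = σ_c`. -/
theorem riemann_case2a_rankine_hugoniot
    (f : ℝ → ℝ → ℝ) (hf : ∀ s c, f s c = s * (4 - s) / (1 + c))
    (a : ℝ → ℝ) (ha : ∀ c, a c = c)
    (sL cL sR cR sStar sbar σc σ₂ : ℝ)
    (hsL : sL = 2.5) (hcL : cL = 0.5) (hsR : sR = 1) (hcR : cR = 0)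
    (hsStar : sStar = Real.sqrt 5 - 1)
    (hσc : σc = f sStar cL / (sStar + 1))
    (hsbar : f sbar cR = σc * (sbar + 1))
    (hsbar' : sbar ≠ sStar ∧ sbar ≠ sR)
    (hσ₂ : σ₂ = (f sbar cR - f sR cR) / (sbar - sR)) :
    -- Rankine–Hugoniot at the c-discontinuity between (s*,c_L) and (s̄,c_R):
    (f sbar cR - f sStar cL = σc * (sbar - sStar) ∧
     cR * f sbar cR - cL * f sStar cL
       = σc * (sbar * cR + a cR - sStar * cL - a cL)) ∧
    -- Rankine–Hugoniot at the s-discontinuity between (s̄,c_R) and (s_R,c_R):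
    (f sR cR - f sbar cR = σ₂ * (sR - sbar)) ∧
    -- the characteristic speed at s* matches σ_c:
    HasDerivAt (fun s => f s cL) σc sStar :=
  riemann_case2a_rankine_hugoniot_general f hf a ha cL sR cR sStar sbar σc σ₂ hsStar hσc hsbar hσ₂
end
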